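/- Let μ ≥ 1, n ≥ 1, and let (A^ε)_{ε ∈ {±1}^μ} be a family of real n×n matrices satisfying the Seifert symmetry (A^ε)ᵀ = A^{−ε} for all ε. Set A(ω) = Σ_{ε ∈ {±1}^μ} ε₁⋯ε_μ · ω₁^{(1−ε₁)/2} ⋯ ω_μ^{(1−ε_μ)/2} · A^ε for ω ∈ ℂ^μ. Then for every ω with |ω_i| = 1 for all i, the conjugate transpose of A(ω) satisfies A(ω)^† = (∏_{i=1}^μ (−conj(ω_i))) · A(ω). -/

import Mathlib

open Matrix BigOperators

/-- The matrix `A(ω) = Σ_{ε ∈ {±1}^μ} ε₁⋯ε_μ · ω₁^{(1−ε₁)/2} ⋯ ω_μ^{(1−ε_μ)/2} · A^ε`,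
where sign tuples are encoded as functions `Fin μ → ℤˣ`. -/
noncomputable def cfMatrixA {μ n : ℕ} (A : (Fin μ → ℤˣ) → Matrix (Fin n) (Fin n) ℝ)
    (ω : Fin μ → ℂ) : Matrix (Fin n) (Fin n) ℂ :=
  ∑ ε : Fin μ → ℤˣ,
    ((((∏ i, (ε i : ℤ)) : ℤ) : ℂ) * ∏ i, ω i ^ ((1 - ((ε i : ℤ))) / 2)) •
      (A ε).map (Complex.ofReal)

/-! Coordinatewise, conjugating the weight `(−s) · ω^{(1+s)/2}` of `−s ∈ {±1}` gives
`−conj ω · s · ω^{(1−s)/2}` as soon as `conj ω · ω = 1`. Hence the conjugate of the coefficient of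
`A^{−ε}` is `∏ (−conj ω_i)` times the coefficient of `A^ε`, and the Seifert symmetry lets the
conjugate transpose of `A(ω)` be reindexed by `ε ↦ −ε`. -/

theorem star_neg_sign_mul_zpow {K : Type*} [Field K] [StarRing K] {z : K}
    (hz : star z * z = 1) (s : ℤˣ) :
    star ((((-s : ℤˣ) : ℤ) : K) * z ^ ((1 - ((-s : ℤˣ) : ℤ)) / 2)) =
      -star z * (((s : ℤ) : K) * z ^ ((1 - (s : ℤ)) / 2)) := by
  rcases Int.units_eq_one_or s with rfl | rfl <;> simp [hz]

noncomputable def cfCoeff {μ : ℕ} (ε : Fin μ → ℤˣ) (ω : Fin μ → ℂ) : ℂ :=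
  (((∏ i, (ε i : ℤ)) : ℤ) : ℂ) * ∏ i, ω i ^ ((1 - ((ε i : ℤ))) / 2)

theorem cfCoeff_eq_prod {μ : ℕ} (ε : Fin μ → ℤˣ) (ω : Fin μ → ℂ) :
    cfCoeff ε ω = ∏ i, ((ε i : ℤ) : ℂ) * ω i ^ ((1 - ((ε i : ℤ))) / 2) := by
  rw [cfCoeff, Finset.prod_mul_distrib, Int.cast_prod]

theorem star_cfCoeff_neg {μ : ℕ} (ε : Fin μ → ℤˣ) {ω : Fin μ → ℂ} (hω : ∀ i, ‖ω i‖ = 1) :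
    star (cfCoeff (-ε) ω) = (∏ i, -starRingEnd ℂ (ω i)) * cfCoeff ε ω := by
  have hunit (i : Fin μ) : star (ω i) * ω i = 1 := by
    simpa [hω i] using Complex.conj_mul' (ω i)
  simp only [cfCoeff_eq_prod, star_prod, ← Finset.prod_mul_distrib, Pi.neg_apply,
    star_neg_sign_mul_zpow (hunit _)]
  rfl

theorem conjTranspose_map_ofReal {m n : Type*} (M : Matrix m n ℝ) :
    (M.map Complex.ofReal)ᴴ = Mᵀ.map Complex.ofReal := by
  rw [← conjTranspose_map _ fun r => (Complex.conj_ofReal r).symm,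
    conjTranspose_eq_transpose_of_trivial]

theorem cfMatrixA_conjTranspose_general {μ n : ℕ}
    (A : (Fin μ → ℤˣ) → Matrix (Fin n) (Fin n) ℝ)
    (hA : ∀ ε : Fin μ → ℤˣ, (A ε)ᵀ = A (-ε))
    (ω : Fin μ → ℂ) (hω : ∀ i, ‖ω i‖ = 1) :
    (cfMatrixA A ω)ᴴ = (∏ i, -starRingEnd ℂ (ω i)) • cfMatrixA A ω := by
  change (∑ ε, cfCoeff ε ω • (A ε).map Complex.ofReal)ᴴ =
    _ • ∑ ε, cfCoeff ε ω • (A ε).map Complex.ofReal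
  rw [conjTranspose_sum, Finset.smul_sum, ← Equiv.sum_comp (Equiv.neg _)]
  refine Finset.sum_congr rfl fun ε _ => ?_
  rw [conjTranspose_smul, conjTranspose_map_ofReal, Equiv.neg_apply, hA, neg_neg,
    star_cfCoeff_neg ε hω, smul_smul]

/-- if the family `(A^ε)` of real `n × n` matrices satisfies the Seifert
symmetry `(A^ε)ᵀ = A^{−ε}`, then for every `ω ∈ (S¹)^μ` the conjugate transpose of
`A(ω)` satisfies `A(ω)^† = (∏_{i=1}^μ (−conj(ω_i))) · A(ω)`. -/
theorem cfMatrixA_conjTranspose {μ n : ℕ} (hμ : 1 ≤ μ) (hn : 1 ≤ n)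
    (A : (Fin μ → ℤˣ) → Matrix (Fin n) (Fin n) ℝ)
    (hA : ∀ ε : Fin μ → ℤˣ, (A ε)ᵀ = A (-ε))
    (ω : Fin μ → ℂ) (hω : ∀ i, ‖ω i‖ = 1) :
    (cfMatrixA A ω)ᴴ = (∏ i, -starRingEnd ℂ (ω i)) • cfMatrixA A ω :=
  cfMatrixA_conjTranspose_general A hA ω hω
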